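/- Let R be a commutative ring and let F(u,v) ∈ R[[u,v]] be a formal power series with zero constant term which is commutative, F(u,v) = F(v,u), and associative, F(F(u,v),w) = F(u,F(v,w)), and let F₋(u,v) ∈ R[[u,v]] have zero constant term and satisfy F(F₋(u,v),v) = u and F₋(F(u,v),v) = u. Fix r ≥ 1, let s_i be the i-th elementary symmetric polynomial in μ₁,…,μ_r, define G^i(μ₁,…,μ_r,x) := s_i(F(μ₁,x),…,F(μ_r,x)) and G₋^i(μ₁,…,μ_r,x) := s_i(F₋(μ₁,x),…,F₋(μ_r,x)), and let H^i, H₋^i ∈ R[[t₁,…,t_r,x]] be power series with G^i = H^i(s₁,…,s_r,x) and G₋^i = H₋^i(s₁,…,s_r,x). Then the following associativity identities hold in R[[μ₁,…,μ_r,x,y]]: H^i(G^1(μ,x),…,G^r(μ,x),y) = G^i(μ₁,…,μ_r,F(x,y)) and H₋^i(G₋^1(μ,x),…,G₋^r(μ,x),y) = G₋^i(μ₁,…,μ_r,F(x,y)). -/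

import Mathlib

open MvPowerSeries

noncomputable section

/-- Substitution of a family of multivariate power series (each with vanishing constant
term) into a power series in finitely many variables, defined coefficientwise by the
(finite) sum `coeff d (f(t)) = ∑_e coeff e f * coeff d (∏ᵢ tᵢ^{eᵢ})`. -/
def msubst {R : Type*} [CommRing R] {σ τ : Type*} [Fintype σ] [DecidableEq σ]
    (t : σ → MvPowerSeries τ R) (f : MvPowerSeries σ R) : MvPowerSeries τ R :=
  fun d =>
    ∑ e ∈ Fintype.piFinset fun _ : σ => Finset.range (d.sum (fun _ n => n) + 1),
      MvPowerSeries.coeff (Finsupp.equivFunOnFinite.symm e) f *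
        MvPowerSeries.coeff d (∏ i, t i ^ e i)

/-- The `(i+1)`-st elementary symmetric polynomial evaluated on a family of `r` power
series. -/
def esymmPS (R : Type*) [CommRing R] (r : ℕ) {τ : Type*}
    (v : Fin r → MvPowerSeries τ R) (i : Fin r) : MvPowerSeries τ R :=
  MvPolynomial.aeval v (MvPolynomial.esymm (Fin r) R ((i : ℕ) + 1))

/-- `Gⁱ(μ₁,…,μ_r,t) := sᵢ(F(μ₁,t),…,F(μ_r,t))`. -/
def Gser {R : Type*} [CommRing R] (F : MvPowerSeries (Fin 2) R) (r : ℕ) {τ : Type*}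
    (μ : Fin r → MvPowerSeries τ R) (t : MvPowerSeries τ R) (i : Fin r) :
    MvPowerSeries τ R :=
  esymmPS R r (fun j : Fin r => msubst ![μ j, t] F) i

end

/-!
On families with vanishing constant terms `msubst` agrees with `MvPowerSeries.subst`, so it is
a ring homomorphism compatible with composition, and an identity in `R[[u,v,w]]` may be
evaluated at any triple of such series. Substituting `μⱼ ↦ F(μⱼ,x)`, `x ↦ y` into `Gⁱ(μ,x) = Hⁱ(s(μ),x)` turns the left side into
`sᵢ(F(F(μⱼ,x),y))` and the right side into `Hⁱ(G(μ,x),y)`; associativity of `F` rewrites the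
former as `Gⁱ(μ,F(x,y))`. The same argument works for `F₋` once one knows
`F₋(F₋(u,v),w) = F₋(u,F(v,w))`, which follows from commutativity, associativity and the two
inverse identities: `a := F₋(u,F(v,w))` satisfies `F(F(a,w),v) = u`, hence `F₋(u,v) = F(a,w)` and
`F₋(F₋(u,v),w) = a`.
-/

section Subst

variable {R : Type*} [CommRing R] {σ τ : Type*} [Fintype σ]

lemma coeff_prod_pow_eq_zero {t : σ → MvPowerSeries τ R}
    (ht : ∀ i, constantCoeff (t i) = 0) {e : σ → ℕ} {d : τ →₀ ℕ} {i : σ}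
    (hi : d.degree < e i) : coeff d (∏ i, t i ^ e i) = 0 := by
  refine coeff_of_lt_order (lt_of_lt_of_le ?_ (le_order_prod _ _))
  calc (d.degree : ℕ∞) < e i := by exact_mod_cast hi
    _ ≤ ∑ j, (e j : ℕ∞) := by
      exact_mod_cast Finset.single_le_sum (fun j _ => Nat.zero_le (e j)) (Finset.mem_univ i)
    _ ≤ ∑ j, (t j ^ e j).order :=
      Finset.sum_le_sum fun j _ => le_order_pow_of_constantCoeff_eq_zero _ (ht j)

variable [DecidableEq σ]

theorem msubst_eq_subst {t : σ → MvPowerSeries τ R} (ht : ∀ i, constantCoeff (t i) = 0)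
    (f : MvPowerSeries σ R) : msubst t f = subst t f := by
  ext d
  rw [coeff_subst (hasSubst_of_constantCoeff_zero ht),
    ← finsum_comp_equiv Finsupp.equivFunOnFinite.symm]
  simp only [smul_eq_mul, Finsupp.prod_fintype _ _ (fun _ => pow_zero _),
    Finsupp.coe_equivFunOnFinite_symm]
  -- outside the box `eᵢ ≤ deg d` the product `∏ tᵢ ^ eᵢ` has order `> deg d`
  refine (finsum_eq_sum_of_support_subset _ fun e he => ?_).symm
  simp only [Fintype.coe_piFinset, Set.mem_pi, Set.mem_univ, Finset.coe_range, Set.mem_Iio,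
    forall_const]
  intro i
  by_contra hi
  exact he (mul_eq_zero_of_right _ (coeff_prod_pow_eq_zero ht (not_lt.mp hi)))

lemma constantCoeff_msubst {t : σ → MvPowerSeries τ R} (ht : ∀ i, constantCoeff (t i) = 0)
    {f : MvPowerSeries σ R} (hf : constantCoeff f = 0) : constantCoeff (msubst t f) = 0 := by
  rw [msubst_eq_subst ht]
  exact constantCoeff_subst_eq_zero (hasSubst_of_constantCoeff_zero ht) ht hf

lemma msubst_X {t : σ → MvPowerSeries τ R} (ht : ∀ i, constantCoeff (t i) = 0) (i : σ) :
    msubst t (X i) = t i := by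
  rw [msubst_eq_subst ht, subst_X (hasSubst_of_constantCoeff_zero ht)]

lemma msubst_msubst {υ : Type*} [Fintype τ] [DecidableEq τ] {t : σ → MvPowerSeries τ R}
    {u : τ → MvPowerSeries υ R} (ht : ∀ i, constantCoeff (t i) = 0)
    (hu : ∀ i, constantCoeff (u i) = 0) (f : MvPowerSeries σ R) :
    msubst u (msubst t f) = msubst (fun i => msubst u (t i)) f := by
  rw [msubst_eq_subst (fun i => constantCoeff_msubst hu (ht i)), msubst_eq_subst ht,
    msubst_eq_subst hu]
  simp_rw [msubst_eq_subst hu]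
  exact subst_comp_subst_apply (hasSubst_of_constantCoeff_zero ht)
    (hasSubst_of_constantCoeff_zero hu) f

lemma msubst_aeval {ι : Type*} {t : σ → MvPowerSeries τ R}
    (ht : ∀ i, constantCoeff (t i) = 0) (v : ι → MvPowerSeries σ R) (p : MvPolynomial ι R) :
    msubst t (MvPolynomial.aeval v p) = MvPolynomial.aeval (fun j => msubst t (v j)) p := by
  simp only [msubst_eq_subst ht, ← coe_substAlgHom (hasSubst_of_constantCoeff_zero ht)]
  exact MvPolynomial.comp_aeval_apply _ _ p

end Subst

section Esymm

variable {R : Type*} [CommRing R] {τ : Type*} {r : ℕ}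

lemma constantCoeff_esymmPS {v : Fin r → MvPowerSeries τ R}
    (hv : ∀ j, constantCoeff (v j) = 0) (i : Fin r) :
    constantCoeff (esymmPS R r v i) = 0 := by
  rw [esymmPS, MvPolynomial.esymm, map_sum, map_sum]
  refine Finset.sum_eq_zero fun s hs => ?_
  obtain ⟨j, hj⟩ : s.Nonempty := by
    rw [← Finset.card_pos, (Finset.mem_powersetCard.mp hs).2]; omega
  rw [map_prod, map_prod]
  exact Finset.prod_eq_zero hj (by rw [MvPolynomial.aeval_X, hv j])

lemma msubst_esymmPS {σ : Type*} [Fintype σ] [DecidableEq σ] {t : σ → MvPowerSeries τ R}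
    (ht : ∀ i, constantCoeff (t i) = 0) (v : Fin r → MvPowerSeries σ R) (i : Fin r) :
    msubst t (esymmPS R r v i) = esymmPS R r (fun j => msubst t (v j)) i :=
  msubst_aeval ht v _

end Esymm

section BinaryLaws

variable {R : Type*} [CommRing R] {τ : Type*}

lemma msubst_msubst_pair {σ : Type*} [Fintype σ] [DecidableEq σ]
    {ρ : σ → MvPowerSeries τ R} (hρ : ∀ k, constantCoeff (ρ k) = 0)
    {P Q : MvPowerSeries σ R} (hP : constantCoeff P = 0) (hQ : constantCoeff Q = 0)
    (G : MvPowerSeries (Fin 2) R) :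
    msubst ρ (msubst ![P, Q] G) = msubst ![msubst ρ P, msubst ρ Q] G := by
  rw [msubst_msubst (Fin.forall_fin_two.mpr ⟨hP, hQ⟩) hρ]
  congr 1
  funext k
  fin_cases k <;> rfl

variable {P Q S : MvPowerSeries τ R}

lemma constantCoeff_msubst_pair {G : MvPowerSeries (Fin 2) R} (hG : constantCoeff G = 0)
    (hP : constantCoeff P = 0) (hQ : constantCoeff Q = 0) :
    constantCoeff (msubst ![P, Q] G) = 0 :=
  constantCoeff_msubst (Fin.forall_fin_two.mpr ⟨hP, hQ⟩) hG

lemma msubst_pair_swap {F : MvPowerSeries (Fin 2) R} (hcomm : msubst ![X 1, X 0] F = F)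
    (hP : constantCoeff P = 0) (hQ : constantCoeff Q = 0) :
    msubst ![Q, P] F = msubst ![P, Q] F := by
  have hPQ : ∀ k, constantCoeff (![P, Q] k) = 0 := Fin.forall_fin_two.mpr ⟨hP, hQ⟩
  simpa [msubst_msubst_pair hPQ, msubst_X hPQ] using congrArg (msubst ![P, Q]) hcomm

lemma msubst_pair_assoc {D F : MvPowerSeries (Fin 2) R}
    (hD0 : constantCoeff D = 0) (hF0 : constantCoeff F = 0)
    (hassoc : (msubst ![msubst ![X 0, X 1] D, X 2] D : MvPowerSeries (Fin 3) R)
      = msubst ![X 0, msubst ![X 1, X 2] F] D)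
    (hP : constantCoeff P = 0) (hQ : constantCoeff Q = 0) (hS : constantCoeff S = 0) :
    msubst ![msubst ![P, Q] D, S] D = msubst ![P, msubst ![Q, S] F] D := by
  have hPQS : ∀ k, constantCoeff (![P, Q, S] k) = 0 := by
    intro k; fin_cases k <;> assumption
  simpa [msubst_msubst_pair hPQS, msubst_X hPQS, constantCoeff_msubst, hD0, hF0]
    using congrArg (msubst ![P, Q, S]) hassoc

lemma msubst_pair_cancel {F G : MvPowerSeries (Fin 2) R} (hG0 : constantCoeff G = 0)
    (hinv : msubst ![G, X 1] F = X 0)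
    (hP : constantCoeff P = 0) (hQ : constantCoeff Q = 0) :
    msubst ![msubst ![P, Q] G, Q] F = P := by
  have hPQ : ∀ k, constantCoeff (![P, Q] k) = 0 := Fin.forall_fin_two.mpr ⟨hP, hQ⟩
  simpa [msubst_msubst_pair hPQ, msubst_X hPQ, hG0] using congrArg (msubst ![P, Q]) hinv

end BinaryLaws

section FormalGroupLaw

variable {R : Type*} [CommRing R] {τ : Type*}

lemma difference_law_assoc {F Fm : MvPowerSeries (Fin 2) R}
    (hF0 : constantCoeff F = 0) (hFm0 : constantCoeff Fm = 0)
    (hcomm : msubst ![X 1, X 0] F = F)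
    (hassoc : (msubst ![msubst ![X 0, X 1] F, X 2] F : MvPowerSeries (Fin 3) R)
      = msubst ![X 0, msubst ![X 1, X 2] F] F)
    (hinv₁ : msubst ![Fm, X 1] F = X 0) (hinv₂ : msubst ![F, X 1] Fm = X 0)
    {P Q S : MvPowerSeries τ R}
    (hP : constantCoeff P = 0) (hQ : constantCoeff Q = 0) (hS : constantCoeff S = 0) :
    msubst ![msubst ![P, Q] Fm, S] Fm = msubst ![P, msubst ![Q, S] F] Fm := by
  set A := msubst ![P, msubst ![Q, S] F] Fm
  have hQS : constantCoeff (msubst ![Q, S] F) = 0 := constantCoeff_msubst_pair hF0 hQ hS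
  have hA : constantCoeff A = 0 := constantCoeff_msubst_pair hFm0 hP hQS
  have hAS : msubst ![msubst ![A, S] F, Q] F = P := by
    rw [msubst_pair_assoc hF0 hF0 hassoc hA hS hQ, msubst_pair_swap hcomm hQ hS]
    exact msubst_pair_cancel hFm0 hinv₁ hP hQS
  have hPQ : msubst ![P, Q] Fm = msubst ![A, S] F := by
    simpa only [hAS] using msubst_pair_cancel hF0 hinv₂ (constantCoeff_msubst_pair hF0 hA hS) hQ
  rw [hPQ]
  exact msubst_pair_cancel hF0 hinv₂ hA hS

end FormalGroupLaw

section Twisting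

variable {R : Type*} [CommRing R] {r : ℕ}

lemma msubst_Gser {σ τ : Type*} [Fintype σ] [DecidableEq σ] {ρ : σ → MvPowerSeries τ R}
    (hρ : ∀ k, constantCoeff (ρ k) = 0) (D : MvPowerSeries (Fin 2) R)
    {μ : Fin r → MvPowerSeries σ R} {t : MvPowerSeries σ R}
    (hμ : ∀ j, constantCoeff (μ j) = 0) (ht : constantCoeff t = 0) (i : Fin r) :
    msubst ρ (Gser D r μ t i) = Gser D r (fun j => msubst ρ (μ j)) (msubst ρ t) i := by
  simp only [Gser, msubst_esymmPS hρ, msubst_msubst_pair hρ (hμ _) ht]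

theorem twisting_series_assoc_of_assoc {D F : MvPowerSeries (Fin 2) R}
    (hD0 : constantCoeff D = 0) (hF0 : constantCoeff F = 0)
    (hassoc : (msubst ![msubst ![X 0, X 1] D, X 2] D : MvPowerSeries (Fin 3) R)
      = msubst ![X 0, msubst ![X 1, X 2] F] D)
    (H : Fin r → MvPowerSeries (Fin r ⊕ Unit) R)
    (hH : ∀ i, msubst
        (Sum.elim (esymmPS R r fun j : Fin r => X (Sum.inl j))
          (fun _ : Unit => (X (Sum.inr ()) : MvPowerSeries (Fin r ⊕ Unit) R)))
        (H i)
      = Gser D r (fun j : Fin r => X (Sum.inl j)) (X (Sum.inr ())) i)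
    (i : Fin r) :
    msubst
        (Sum.elim (Gser D r (fun j : Fin r => X (Sum.inl j)) (X (Sum.inr 0)))
          (fun _ : Unit => (X (Sum.inr 1) : MvPowerSeries (Fin r ⊕ Fin 2) R)))
        (H i)
      = Gser D r (fun j : Fin r => X (Sum.inl j))
          (msubst ![X (Sum.inr 0), X (Sum.inr 1)] F) i := by
  set s : Fin r ⊕ Unit → MvPowerSeries (Fin r ⊕ Unit) R :=
    Sum.elim (esymmPS R r fun j => X (Sum.inl j)) fun _ => X (Sum.inr ())
  set φ : Fin r ⊕ Unit → MvPowerSeries (Fin r ⊕ Fin 2) R :=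
    Sum.elim (fun j => msubst ![X (Sum.inl j), X (Sum.inr 0)] D) fun _ => X (Sum.inr 1)
  have hs : ∀ a, constantCoeff (s a) = 0 := by
    rintro (k | _)
    · exact constantCoeff_esymmPS (fun _ => constantCoeff_X _) k
    · exact constantCoeff_X _
  have hφ : ∀ a, constantCoeff (φ a) = 0 := by
    rintro (j | _)
    · exact constantCoeff_msubst_pair hD0 (constantCoeff_X _) (constantCoeff_X _)
    · exact constantCoeff_X _
  have hφs : (fun a => msubst φ (s a))
      = Sum.elim (Gser D r (fun j => X (Sum.inl j)) (X (Sum.inr 0))) fun _ => X (Sum.inr 1) := by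
    funext a
    rcases a with k | _
    · simp only [s, Sum.elim_inl, msubst_esymmPS hφ, msubst_X hφ, Gser]
      rfl
    · exact msubst_X hφ _
  calc _ = msubst φ (Gser D r (fun j => X (Sum.inl j)) (X (Sum.inr ())) i) := by
        rw [← hH, msubst_msubst hs hφ, hφs]
    _ = _ := by
      rw [msubst_Gser hφ D (fun _ => constantCoeff_X _) (constantCoeff_X _)]
      simp only [Gser, msubst_X hφ]
      congr 1
      funext j
      exact msubst_pair_assoc hD0 hF0 hassoc (constantCoeff_X _) (constantCoeff_X _)
        (constantCoeff_X _)

end Twisting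

theorem twisting_series_assoc_general
    {R : Type*} [CommRing R]
    (F Fm : MvPowerSeries (Fin 2) R)
    (hF0 : constantCoeff F = 0) (hFm0 : constantCoeff Fm = 0)
    (hcomm : msubst ![X 1, X 0] F = F)
    (hassoc : (msubst ![msubst ![X 0, X 1] F, X 2] F : MvPowerSeries (Fin 3) R)
      = msubst ![X 0, msubst ![X 1, X 2] F] F)
    (hinv₁ : msubst ![Fm, X 1] F = X 0)
    (hinv₂ : msubst ![F, X 1] Fm = X 0)
    (r : ℕ)
    (H Hm : Fin r → MvPowerSeries (Fin r ⊕ Unit) R)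
    -- `Gⁱ = Hⁱ(s₁,…,s_r,x)` in `R[[μ₁,…,μ_r,x]]`
    (hH : ∀ i, msubst
        (Sum.elim (esymmPS R r fun j : Fin r => X (Sum.inl j))
          (fun _ : Unit => (X (Sum.inr ()) : MvPowerSeries (Fin r ⊕ Unit) R)))
        (H i)
      = Gser F r (fun j : Fin r => X (Sum.inl j)) (X (Sum.inr ())) i)
    -- `G₋ⁱ = H₋ⁱ(s₁,…,s_r,x)` in `R[[μ₁,…,μ_r,x]]`
    (hHm : ∀ i, msubst
        (Sum.elim (esymmPS R r fun j : Fin r => X (Sum.inl j))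
          (fun _ : Unit => (X (Sum.inr ()) : MvPowerSeries (Fin r ⊕ Unit) R)))
        (Hm i)
      = Gser Fm r (fun j : Fin r => X (Sum.inl j)) (X (Sum.inr ())) i) :
    -- the associativity identities in `R[[μ₁,…,μ_r,x,y]]`
    (∀ i, msubst
        (Sum.elim (Gser F r (fun j : Fin r => X (Sum.inl j)) (X (Sum.inr 0)))
          (fun _ : Unit => (X (Sum.inr 1) : MvPowerSeries (Fin r ⊕ Fin 2) R)))
        (H i)
      = Gser F r (fun j : Fin r => X (Sum.inl j))
          (msubst ![X (Sum.inr 0), X (Sum.inr 1)] F) i) ∧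
    (∀ i, msubst
        (Sum.elim (Gser Fm r (fun j : Fin r => X (Sum.inl j)) (X (Sum.inr 0)))
          (fun _ : Unit => (X (Sum.inr 1) : MvPowerSeries (Fin r ⊕ Fin 2) R)))
        (Hm i)
      = Gser Fm r (fun j : Fin r => X (Sum.inl j))
          (msubst ![X (Sum.inr 0), X (Sum.inr 1)] F) i) :=
  ⟨twisting_series_assoc_of_assoc hF0 hF0 hassoc H hH,
    twisting_series_assoc_of_assoc hFm0 hF0
      (difference_law_assoc hF0 hFm0 hcomm hassoc hinv₁ hinv₂
        (constantCoeff_X 0) (constantCoeff_X 1) (constantCoeff_X 2)) Hm hHm⟩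

/-- **Associativity identities for the twisting series.** Let `F ∈ R[[u,v]]` be a
commutative associative formal group law with formal difference law `F₋`
(`F(F₋(u,v),v) = u`, `F₋(F(u,v),v) = u`), both with zero constant term. Fix `r ≥ 1`, set
`Gⁱ(μ,t) := sᵢ(F(μ₁,t),…,F(μ_r,t))` and `G₋ⁱ(μ,t) := sᵢ(F₋(μ₁,t),…,F₋(μ_r,t))`, and let
`Hⁱ, H₋ⁱ ∈ R[[t₁,…,t_r,x]]` satisfy `Gⁱ(μ,x) = Hⁱ(s₁,…,s_r,x)` and
`G₋ⁱ(μ,x) = H₋ⁱ(s₁,…,s_r,x)`. Then, in `R[[μ₁,…,μ_r,x,y]]`,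
`Hⁱ(G¹(μ,x),…,Gʳ(μ,x),y) = Gⁱ(μ,F(x,y))` and
`H₋ⁱ(G₋¹(μ,x),…,G₋ʳ(μ,x),y) = G₋ⁱ(μ,F(x,y))`. -/
theorem twisting_series_assoc
    {R : Type*} [CommRing R]
    (F Fm : MvPowerSeries (Fin 2) R)
    (hF0 : constantCoeff F = 0) (hFm0 : constantCoeff Fm = 0)
    (hcomm : msubst ![X 1, X 0] F = F)
    (hassoc : (msubst ![msubst ![X 0, X 1] F, X 2] F : MvPowerSeries (Fin 3) R)
      = msubst ![X 0, msubst ![X 1, X 2] F] F)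
    (hinv₁ : msubst ![Fm, X 1] F = X 0)
    (hinv₂ : msubst ![F, X 1] Fm = X 0)
    (r : ℕ) (hr : 1 ≤ r)
    (H Hm : Fin r → MvPowerSeries (Fin r ⊕ Unit) R)
    -- `Gⁱ = Hⁱ(s₁,…,s_r,x)` in `R[[μ₁,…,μ_r,x]]`
    (hH : ∀ i, msubst
        (Sum.elim (esymmPS R r fun j : Fin r => X (Sum.inl j))
          (fun _ : Unit => (X (Sum.inr ()) : MvPowerSeries (Fin r ⊕ Unit) R)))
        (H i)
      = Gser F r (fun j : Fin r => X (Sum.inl j)) (X (Sum.inr ())) i)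
    -- `G₋ⁱ = H₋ⁱ(s₁,…,s_r,x)` in `R[[μ₁,…,μ_r,x]]`
    (hHm : ∀ i, msubst
        (Sum.elim (esymmPS R r fun j : Fin r => X (Sum.inl j))
          (fun _ : Unit => (X (Sum.inr ()) : MvPowerSeries (Fin r ⊕ Unit) R)))
        (Hm i)
      = Gser Fm r (fun j : Fin r => X (Sum.inl j)) (X (Sum.inr ())) i) :
    -- the associativity identities in `R[[μ₁,…,μ_r,x,y]]`
    (∀ i, msubst
        (Sum.elim (Gser F r (fun j : Fin r => X (Sum.inl j)) (X (Sum.inr 0)))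
          (fun _ : Unit => (X (Sum.inr 1) : MvPowerSeries (Fin r ⊕ Fin 2) R)))
        (H i)
      = Gser F r (fun j : Fin r => X (Sum.inl j))
          (msubst ![X (Sum.inr 0), X (Sum.inr 1)] F) i) ∧
    (∀ i, msubst
        (Sum.elim (Gser Fm r (fun j : Fin r => X (Sum.inl j)) (X (Sum.inr 0)))
          (fun _ : Unit => (X (Sum.inr 1) : MvPowerSeries (Fin r ⊕ Fin 2) R)))
        (Hm i)
      = Gser Fm r (fun j : Fin r => X (Sum.inl j))
          (msubst ![X (Sum.inr 0), X (Sum.inr 1)] F) i) :=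
  twisting_series_assoc_general F Fm hF0 hFm0 hcomm hassoc hinv₁ hinv₂ r H Hm hH hHm
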